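/- arXiv:1706.09873 — 3 statements merged into one kernel-verified Lean document; each statement's English description precedes it below -/
import Mathlib

section
/- If K is the Q-augmentation of K̇ (so K = K̇ followed by refreshing the auxiliary variable from Q), then μK = μ implies μ* K̇ = μ* for the T-marginal μ* of μ; conversely μ̇K̇ = μ̇ implies μK = μ for μ(dθ,dy) = μ̇(dθ)Q_θ(dy). The same implications hold with 'invariant' replaced by 'reversible'. -/
open MeasureTheory ProbabilityTheory Filter
open scoped ENNReal

section Defs
variable {X : Type*} [MeasurableSpace X]

/-- The Markov operator `K f (x) = ∫ f(y) K(x, dy)`. -/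
noncomputable def kOp (K : Kernel X X) (f : X → ℝ) : X → ℝ :=
  fun x => ∫ y, f y ∂(K x)

/-- Iterates of the Markov operator: `kIter K n f = Kⁿ f`. -/
noncomputable def kIter (K : Kernel X X) : ℕ → (X → ℝ) → (X → ℝ)
  | 0, f => f
  | n + 1, f => kOp K (kIter K n f)

/-- Iterates of a kernel, as kernels. -/
noncomputable def kIterK (K : Kernel X X) : ℕ → Kernel X X
  | 0 => Kernel.id
  | n + 1 => K.comp (kIterK K n)

/-- Detailed balance / reversibility of `K` with respect to `μ`. -/
def Reversible (μ : Measure X) (K : Kernel X X) : Prop :=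
  μ.compProd K = (μ.compProd K).map Prod.swap

/-- Invariance of `μ` for `K`. -/
def Invariant (μ : Measure X) (K : Kernel X X) : Prop :=
  μ.bind (fun x => K x) = μ

/-- Harris ergodicity: invariance, ψ-irreducibility, and triviality of bounded
harmonic functions (a standing proxy for Harris recurrence). -/
def HarrisErgodic (μ : Measure X) (K : Kernel X X) : Prop :=
  Invariant μ K ∧
  (∃ ψ : Measure X, ψ ≠ 0 ∧ ∀ A : Set X, MeasurableSet A → 0 < ψ A →
    ∀ x : X, ∃ n : ℕ, 0 < kIterK K n x A) ∧
  (∀ f : X → ℝ, Measurable f → (∃ C, ∀ x, |f x| ≤ C) → kOp K f = f →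
    ∃ c : ℝ, f =ᵐ[μ] fun _ => c)

/-- Centering of `f` with respect to `μ`. -/
noncomputable def center (μ : Measure X) (f : X → ℝ) : X → ℝ :=
  fun x => f x - ∫ y, f y ∂μ

/-- `n⁻¹ E[(∑_{k<n} (f(X_k) - μ(f)))²]` for the stationary chain with kernel `K`,
expanded via stationarity into covariances `∫ f̄ · K^{|i-j|} f̄ dμ`. -/
noncomputable def avarSeq (μ : Measure X) (K : Kernel X X) (f : X → ℝ) (n : ℕ) : ℝ :=
  (n : ℝ)⁻¹ * ∑ i ∈ Finset.range n, ∑ j ∈ Finset.range n,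
    ∫ x, center μ f x * kIter K (max i j - min i j) (center μ f) x ∂μ

/-- `v` is the asymptotic variance of `f` for the stationary chain with kernel `K`. -/
def IsAvar (μ : Measure X) (K : Kernel X X) (f : X → ℝ) (v : ℝ) : Prop :=
  Tendsto (avarSeq μ K f) atTop (nhds v)

/-- The variance `var_μ(f)`. -/
noncomputable def varOf (μ : Measure X) (f : X → ℝ) : ℝ :=
  ∫ x, f x ^ 2 ∂μ - (∫ x, f x ∂μ) ^ 2

/-- The Dirichlet form `E_K(f) = ⟨f, (I - K) f⟩_μ`. -/
noncomputable def dirichlet (μ : Measure X) (K : Kernel X X) (f : X → ℝ) : ℝ :=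
  ∫ x, f x * (f x - kOp K f x) ∂μ

end Defs

/-!
Write `J := Kernel.id ×ₖ Q`, so that `μ̇(dθ) Q_θ(dy)` is `J ∘ₘ μ̇` and the augmented kernel is
`K = (J ∘ₖ K̇) ∘ fst`. Since `J θ` lives on `{θ} × Y`, projecting `K` to the first coordinate
gives `K̇ ∘ fst`, and `K ∘ₖ J = J ∘ₖ K̇`; these transport invariance in both directions. For
reversibility, one step of `K` started from `J ∘ₘ μ̇` has joint law `(J ∥ₖ J) ∘ₘ (μ̇ ⊗ₘ K̇)`, and
`J ∥ₖ J` commutes with swapping the two coordinates.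
-/

namespace MeasureTheory.Measure

variable {α β γ : Type*} [MeasurableSpace α] [MeasurableSpace β] [MeasurableSpace γ]

lemma comp_map_eq_comap_comp (μ : Measure α) (κ : Kernel β γ) {f : α → β} (hf : Measurable f) :
    κ ∘ₘ μ.map f = κ.comap f hf ∘ₘ μ := by
  rw [← deterministic_comp_eq_map hf, comp_assoc, Kernel.comp_deterministic_eq_comap]

lemma map_compProd (μ : Measure α) [SFinite μ] (κ : Kernel β γ) [IsSFiniteKernel κ]
    {f : α → β} (hf : Measurable f) :
    μ.map f ⊗ₘ κ = (μ ⊗ₘ κ.comap f hf).map (Prod.map f id) := by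
  ext s hs
  rw [map_apply (hf.prodMap measurable_id) hs, compProd_apply hs,
    compProd_apply (hf.prodMap measurable_id hs),
    lintegral_map (Kernel.measurable_kernel_prodMk_left hs) hf]
  rfl

end MeasureTheory.Measure

section

variable {X Z : Type*} [MeasurableSpace X] [MeasurableSpace Z]
  {μ : Measure X} {ν : Measure Z} {K : Kernel X X} {L : Kernel Z Z}

lemma Invariant.map {π : X → Z} (hπ : Measurable π) (hKL : K.map π = L.comap π hπ)
    (hμ : Invariant μ K) : Invariant (μ.map π) L := by
  change L ∘ₘ μ.map π = μ.map π
  rw [Measure.comp_map_eq_comap_comp μ L hπ, ← hKL, ← Measure.map_comp μ K hπ]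
  exact congrArg (Measure.map π) hμ

lemma Reversible.map [SFinite μ] [IsSFiniteKernel K] [IsSFiniteKernel L] {π : X → Z}
    (hπ : Measurable π) (hKL : K.map π = L.comap π hπ) (hμ : Reversible μ K) :
    Reversible (μ.map π) L := by
  have hmap : μ.map π ⊗ₘ L = (μ ⊗ₘ K).map (Prod.map π π) := by
    rw [Measure.map_compProd μ L hπ, ← hKL, Measure.compProd_map hπ,
      Measure.map_map (hπ.prodMap measurable_id) (measurable_id.prodMap hπ)]
    rfl
  have hπ2 : Measurable (Prod.map π π) := hπ.prodMap hπ
  unfold Reversible at *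
  rw [hmap, Measure.map_map measurable_swap hπ2, ← Prod.map_comp_swap,
    ← Measure.map_map hπ2 measurable_swap, ← hμ]

lemma Invariant.comp {J : Kernel Z X} (hKJ : K ∘ₖ J = J ∘ₖ L) (hν : Invariant ν L) :
    Invariant (J ∘ₘ ν) K := by
  change K ∘ₘ (J ∘ₘ ν) = J ∘ₘ ν
  rw [Measure.comp_assoc, hKJ, ← Measure.comp_assoc]
  exact congrArg (J ∘ₘ ·) hν

lemma Reversible.of_compProd_eq {J : Kernel Z X}
    (hKJ : μ ⊗ₘ K = (J ∥ₖ J) ∘ₘ (ν ⊗ₘ L)) (hν : Reversible ν L) : Reversible μ K := by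
  unfold Reversible at *
  rw [hKJ, ← Measure.deterministic_comp_eq_map measurable_swap, Measure.comp_assoc]
  change _ = (Kernel.swap X X ∘ₖ (J ∥ₖ J)) ∘ₘ _
  rw [Kernel.swap_parallelComp, ← Measure.comp_assoc, Kernel.swap,
    Measure.deterministic_comp_eq_map, ← hν]

end

namespace ProbabilityTheory.Kernel

variable {T Y : Type*} [MeasurableSpace T] [MeasurableSpace Y]

lemma coe_id_prod (Q : Kernel T Y) [IsSFiniteKernel Q] :
    ⇑(Kernel.id ×ₖ Q) = fun θ => (Q θ).map (Prod.mk θ) := by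
  ext1 θ
  rw [prod_apply, id_apply, Measure.dirac_prod]

lemma id_prod_fst_comp_id_prod (Q : Kernel T Y) [IsSFiniteKernel Q] :
    (Kernel.id ×ₖ deterministic Prod.fst measurable_fst) ∘ₖ (Kernel.id ×ₖ Q) =
      (Kernel.id ×ₖ Q) ×ₖ Kernel.id := by
  rw [Kernel.id, deterministic_prod_deterministic, deterministic_comp_eq_map]
  ext1 θ
  rw [map_apply _ (measurable_id.prodMk measurable_fst), prod_apply _ Kernel.id, id_apply,
    Measure.prod_dirac, coe_id_prod, Measure.map_map (measurable_id.prodMk measurable_fst)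
    measurable_prodMk_left, Measure.map_map measurable_prodMk_right measurable_prodMk_left]
  rfl

noncomputable def augment (Kd : Kernel T T) (Q : Kernel T Y) : Kernel (T × Y) (T × Y) :=
  ((Kernel.id ×ₖ Q) ∘ₖ Kd).comap Prod.fst measurable_fst

instance (Kd : Kernel T T) [IsSFiniteKernel Kd] (Q : Kernel T Y) [IsSFiniteKernel Q] :
    IsSFiniteKernel (augment Kd Q) := by
  unfold augment; infer_instance

variable (Kd : Kernel T T) (Q : Kernel T Y)

lemma augment_apply [IsSFiniteKernel Q] (p : T × Y) :
    augment Kd Q p = (Kd p.1).bind (fun θ' => (Q θ').map (Prod.mk θ')) := by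
  rw [augment, comap_apply, comp_apply, coe_id_prod]

lemma map_fst_augment [IsMarkovKernel Q] :
    (augment Kd Q).map Prod.fst = Kd.comap Prod.fst measurable_fst := by
  rw [augment, ← comap_map_comm _ _ measurable_fst, map_comp, ← fst_eq, fst_prod, id_comp]

lemma augment_comp_id_prod [IsMarkovKernel Q] :
    augment Kd Q ∘ₖ (Kernel.id ×ₖ Q) = (Kernel.id ×ₖ Q) ∘ₖ Kd := by
  rw [augment, ← comp_deterministic_eq_comap, comp_assoc, deterministic_comp_eq_map, ← fst_eq,
    fst_prod, comp_id]

variable [IsSFiniteKernel Kd] [IsSFiniteKernel Q]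

lemma id_prod_augment_comp_id_prod :
    (Kernel.id ×ₖ augment Kd Q) ∘ₖ (Kernel.id ×ₖ Q) =
      (Kernel.id ×ₖ Q) ×ₖ ((Kernel.id ×ₖ Q) ∘ₖ Kd) := by
  rw [augment, ← comp_deterministic_eq_comap, ← id_comp Kernel.id, ← parallelComp_comp_prod,
    comp_assoc, id_prod_fst_comp_id_prod, parallelComp_comp_prod, id_comp, comp_id]

lemma comp_id_prod_compProd_augment (ν : Measure T) [SFinite ν] :
    ((Kernel.id ×ₖ Q) ∘ₘ ν) ⊗ₘ augment Kd Q =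
      ((Kernel.id ×ₖ Q) ∥ₖ (Kernel.id ×ₖ Q)) ∘ₘ (ν ⊗ₘ Kd) := by
  rw [Measure.compProd_eq_comp_prod, Measure.comp_assoc, id_prod_augment_comp_id_prod,
    Measure.compProd_eq_comp_prod, Measure.comp_assoc, parallelComp_comp_prod, comp_id]

end ProbabilityTheory.Kernel

theorem augmented_kernel_invariant_reversible_general
    {T Y : Type*} [MeasurableSpace T] [MeasurableSpace Y]
    (Kd : Kernel T T) [IsMarkovKernel Kd]
    (Q : Kernel T Y) [IsMarkovKernel Q]
    (K : Kernel (T × Y) (T × Y))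
    (hK : ∀ p : T × Y,
      K p = (Kd p.1).bind (fun θ' => (Q θ').map (fun y' => (θ', y')))) :
    (∀ μ : Measure (T × Y), IsProbabilityMeasure μ →
      Invariant μ K → Invariant (μ.map Prod.fst) Kd) ∧
    (∀ μdot : Measure T, IsProbabilityMeasure μdot →
      Invariant μdot Kd →
      Invariant (μdot.bind (fun θ => (Q θ).map (fun y => (θ, y)))) K) ∧
    (∀ μ : Measure (T × Y), IsProbabilityMeasure μ →
      Reversible μ K → Reversible (μ.map Prod.fst) Kd) ∧
    (∀ μdot : Measure T, IsProbabilityMeasure μdot →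
      Reversible μdot Kd →
      Reversible (μdot.bind (fun θ => (Q θ).map (fun y => (θ, y)))) K) := by
  obtain rfl : K = Kernel.augment Kd Q :=
    Kernel.ext fun p => (hK p).trans (Kernel.augment_apply Kd Q p).symm
  rw [show (fun θ => (Q θ).map fun y => (θ, y)) = ⇑(Kernel.id ×ₖ Q) from
    (Kernel.coe_id_prod Q).symm]
  exact ⟨fun μ _ h => h.map measurable_fst (Kernel.map_fst_augment Kd Q),
    fun ν _ h => h.comp (Kernel.augment_comp_id_prod Kd Q),
    fun μ _ h => h.map measurable_fst (Kernel.map_fst_augment Kd Q),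
    fun ν _ h => h.of_compProd_eq (Kernel.comp_id_prod_compProd_augment Kd Q ν)⟩

/-- For an augmented kernel `K` (the `Q`-augmentation of `K̇`):
`μK = μ` implies `μ* K̇ = μ*` for the `T`-marginal `μ*` of `μ`; conversely
`μ̇ K̇ = μ̇` implies `μK = μ` for `μ(dθ,dy) = μ̇(dθ) Q_θ(dy)`; and the same
implications hold with invariance replaced by reversibility. -/
theorem augmented_kernel_invariant_reversible
    {T Y : Type*} [MeasurableSpace T] [MeasurableSpace Y]
    (Kd : Kernel T T) [IsMarkovKernel Kd]
    (Q : Kernel T Y) [IsMarkovKernel Q]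
    (K : Kernel (T × Y) (T × Y)) [IsMarkovKernel K]
    (hK : ∀ p : T × Y,
      K p = (Kd p.1).bind (fun θ' => (Q θ').map (fun y' => (θ', y')))) :
    (∀ μ : Measure (T × Y), IsProbabilityMeasure μ →
      Invariant μ K → Invariant (μ.map Prod.fst) Kd) ∧
    (∀ μdot : Measure T, IsProbabilityMeasure μdot →
      Invariant μdot Kd →
      Invariant (μdot.bind (fun θ => (Q θ).map (fun y => (θ, y)))) K) ∧
    (∀ μ : Measure (T × Y), IsProbabilityMeasure μ →
      Reversible μ K → Reversible (μ.map Prod.fst) Kd) ∧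
    (∀ μdot : Measure T, IsProbabilityMeasure μdot →
      Reversible μdot Kd →
      Reversible (μdot.bind (fun θ => (Q θ).map (fun y => (θ, y)))) K) :=
  augmented_kernel_invariant_reversible_general Kd Q K hK
end

section
/- An augmented kernel K (the Q-augmentation of K̇) is a positive operator on L²(μ) if and only if K̇ is a positive operator on L²(μ̇). -/
open MeasureTheory ProbabilityTheory Filter
open scoped ENNReal

/-! The augmented chain moves `θ` by `K̇` and then redraws `y` afresh from `Q_θ'`, so `K f (θ, y)`
does not depend on `y`: writing `P f θ = ∫ f(θ, y) Q_θ(dy)`, one has `K f (θ, y) = K̇ (P f) θ`,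
and integrating against `μ = μ̇ ⊗ Q` gives `⟨f, K f⟩_μ = ⟨P f, K̇ (P f)⟩_μ̇`. By Jensen, `P` maps
`L²(μ)` into `L²(μ̇)`, and it is onto since `P (g ∘ fst) = g`. The identity needs `K̇ (P f)` to be
defined `μ̇`-a.e., which is where invariance of `μ̇` (a consequence of reversibility) enters. -/

section

variable {α β : Type*} [MeasurableSpace α] [MeasurableSpace β]

lemma Reversible.invariant {μ : Measure α} [SFinite μ] {κ : Kernel α α} [IsMarkovKernel κ]
    (h : Reversible μ κ) : Invariant μ κ :=
  calc κ ∘ₘ μ = (μ ⊗ₘ κ).snd := (Measure.snd_compProd μ κ).symm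
    _ = ((μ ⊗ₘ κ).map Prod.swap).snd := congrArg Measure.snd h
    _ = μ := by rw [Measure.snd_map_swap, Measure.fst_compProd]

lemma bind_map_prodMk_eq_compProd (μ : Measure α) [SFinite μ] (κ : Kernel α β)
    [IsSFiniteKernel κ] : μ.bind (fun a => (κ a).map (fun b => (a, b))) = μ ⊗ₘ κ := by
  rw [Measure.compProd_eq_comp_prod]
  congr with a : 1
  rw [Kernel.prod_apply, Kernel.id_apply, Measure.dirac_prod]

lemma sq_integral_le_integral_sq {ν : Measure α} [IsProbabilityMeasure ν] {f : α → ℝ}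
    (hf : MemLp f 2 ν) : (∫ x, f x ∂ν) ^ 2 ≤ ∫ x, f x ^ 2 ∂ν := by
  have h := variance_nonneg f ν
  rw [variance_eq_sub hf] at h
  simpa [sub_nonneg] using h

lemma memLp_two_of_sq_le {μ : Measure α} {g h : α → ℝ} (hg : AEStronglyMeasurable g μ)
    (hh : Integrable h μ) (hgh : ∀ᵐ a ∂μ, g a ^ 2 ≤ h a) : MemLp g 2 μ := by
  rw [memLp_two_iff_integrable_sq hg]
  refine hh.mono' (hg.pow 2) ?_
  filter_upwards [hgh] with a ha
  rwa [Real.norm_of_nonneg (sq_nonneg _)]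

lemma memLp_two_integral_of_memLp_comp {μ : Measure α} {κ : Kernel α β} [IsMarkovKernel κ]
    {f : β → ℝ} (hf : MemLp f 2 (κ ∘ₘ μ)) : MemLp (fun a => ∫ b, f b ∂κ a) 2 μ := by
  rw [Measure.comp_eq_comp_const_apply] at hf
  refine memLp_two_of_sq_le hf.1.integral_kernel_comp hf.integrable_sq.integral_comp ?_
  filter_upwards [hf.1.comp, hf.integrable_sq.ae_of_comp] with a hfa hf2a
  exact sq_integral_le_integral_sq ((memLp_two_iff_integrable_sq hfa).2 hf2a)

lemma memLp_two_integral_of_memLp_compProd {μ : Measure α} [SFinite μ] {κ : Kernel α β}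
    [IsMarkovKernel κ] {f : α × β → ℝ} (hf : MemLp f 2 (μ ⊗ₘ κ)) :
    MemLp (fun a => ∫ b, f (a, b) ∂κ a) 2 μ := by
  refine memLp_two_of_sq_le hf.1.integral_kernel_compProd hf.integrable_sq.integral_compProd ?_
  filter_upwards [hf.1.compProd_mk_left, hf.integrable_sq.ae_of_compProd] with a hfa hf2a
  exact sq_integral_le_integral_sq ((memLp_two_iff_integrable_sq hfa).2 hf2a)

lemma Invariant.memLp_kOp {μ : Measure α} {κ : Kernel α α} [IsMarkovKernel κ]
    (hinv : Invariant μ κ) {f : α → ℝ} (hf : MemLp f 2 μ) : MemLp (kOp κ f) 2 μ := by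
  rw [Invariant] at hinv
  rw [← hinv] at hf
  exact memLp_two_integral_of_memLp_comp hf

end

section Augmented

variable {T Y : Type*} [MeasurableSpace T] [MeasurableSpace Y]

lemma ae_integrable_compProd_of_invariant {μ : Measure T} [SFinite μ] {κ : Kernel T T}
    [IsSFiniteKernel κ] (hinv : Invariant μ κ) {Q : Kernel T Y} [IsSFiniteKernel Q]
    {f : T × Y → ℝ} (hf : Integrable f (μ ⊗ₘ Q)) : ∀ᵐ θ ∂μ, Integrable f (κ θ ⊗ₘ Q) := by
  have hcomp : μ ⊗ₘ Q = ((Kernel.id ×ₖ Q) ∘ₖ κ) ∘ₘ μ := by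
    rw [← Measure.comp_assoc, show κ ∘ₘ μ = μ from hinv, Measure.compProd_eq_comp_prod]
  rw [hcomp] at hf
  filter_upwards [Measure.ae_integrable_of_integrable_comp hf] with θ hθ
  rwa [Measure.compProd_eq_comp_prod, ← Kernel.comp_apply]

lemma integral_mul_kOp_augmented {μ : Measure T} [IsFiniteMeasure μ] {κ : Kernel T T}
    [IsMarkovKernel κ] (hinv : Invariant μ κ) {Q : Kernel T Y} [IsMarkovKernel Q]
    {K : Kernel (T × Y) (T × Y)} (hK : ∀ p, K p = κ p.1 ⊗ₘ Q)
    {f : T × Y → ℝ} (hf : MemLp f 2 (μ ⊗ₘ Q)) :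
    ∫ p, f p * kOp K f p ∂(μ ⊗ₘ Q) =
      ∫ θ, (∫ y, f (θ, y) ∂Q θ) * kOp κ (fun θ' => ∫ y, f (θ', y) ∂Q θ') θ ∂μ := by
  set P := fun θ' => ∫ y, f (θ', y) ∂Q θ'
  set G := fun θ => ∫ p, f p ∂(κ θ ⊗ₘ Q)
  have hGP : G =ᵐ[μ] kOp κ P := by
    filter_upwards [ae_integrable_compProd_of_invariant hinv (hf.integrable one_le_two)]
      with θ hθ
    exact Measure.integral_compProd hθ
  have hG : MemLp G 2 μ :=
    (hinv.memLp_kOp (memLp_two_integral_of_memLp_compProd hf)).ae_eq hGP.symm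
  have hfst : MeasurePreserving Prod.fst (μ ⊗ₘ Q) μ :=
    ⟨measurable_fst, Measure.fst_compProd μ Q⟩
  have hfG : Integrable (fun p => f p * G p.1) (μ ⊗ₘ Q) :=
    hf.integrable_mul (hG.comp_measurePreserving hfst)
  calc ∫ p, f p * kOp K f p ∂(μ ⊗ₘ Q)
      = ∫ p, f p * G p.1 ∂(μ ⊗ₘ Q) := by simp only [kOp, hK, G]
    _ = ∫ θ, P θ * G θ ∂μ := by
      rw [Measure.integral_compProd hfG]
      simp only [integral_mul_const, P]
    _ = ∫ θ, P θ * kOp κ P θ ∂μ := integral_congr_ae (hGP.mono fun θ h => by simp only [h])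

end Augmented

theorem augmented_kernel_positive_iff_general
    {T Y : Type*} [MeasurableSpace T] [MeasurableSpace Y]
    (μd : Measure T) [IsProbabilityMeasure μd]
    (Kd : Kernel T T) [IsMarkovKernel Kd]
    (Q : Kernel T Y) [IsMarkovKernel Q]
    (hrev : Reversible μd Kd)
    (K : Kernel (T × Y) (T × Y))
    (hK : ∀ p : T × Y,
      K p = (Kd p.1).bind (fun θ' => (Q θ').map (fun y' => (θ', y'))))
    (μ : Measure (T × Y))
    (hμ : μ = μd.bind (fun θ => (Q θ).map (fun y => (θ, y)))) :
    (∀ f : T × Y → ℝ, MemLp f 2 μ → 0 ≤ ∫ p, f p * kOp K f p ∂μ) ↔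
      (∀ g : T → ℝ, MemLp g 2 μd → 0 ≤ ∫ θ, g θ * kOp Kd g θ ∂μd) := by
  have hK' : ∀ p, K p = Kd p.1 ⊗ₘ Q := fun p => (hK p).trans (bind_map_prodMk_eq_compProd _ Q)
  subst hμ
  rw [bind_map_prodMk_eq_compProd]
  constructor
  · intro hpos g hg
    have hf : MemLp (fun p : T × Y => g p.1) 2 (μd ⊗ₘ Q) :=
      hg.comp_measurePreserving ⟨measurable_fst, Measure.fst_compProd μd Q⟩
    simpa [integral_mul_kOp_augmented hrev.invariant hK' hf] using hpos _ hf
  · intro hpos f hf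
    rw [integral_mul_kOp_augmented hrev.invariant hK' hf]
    exact hpos _ (memLp_two_integral_of_memLp_compProd hf)

/-- An augmented kernel `K` (the `Q`-augmentation of `K̇`) is a
positive operator on `L²(μ)` iff `K̇` is a positive operator on `L²(μ̇)`. -/
theorem augmented_kernel_positive_iff
    {T Y : Type*} [MeasurableSpace T] [MeasurableSpace Y]
    (μd : Measure T) [IsProbabilityMeasure μd]
    (Kd : Kernel T T) [IsMarkovKernel Kd]
    (Q : Kernel T Y) [IsMarkovKernel Q]
    (hrev : Reversible μd Kd)
    (K : Kernel (T × Y) (T × Y)) [IsMarkovKernel K]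
    (hK : ∀ p : T × Y,
      K p = (Kd p.1).bind (fun θ' => (Q θ').map (fun y' => (θ', y'))))
    (μ : Measure (T × Y))
    (hμ : μ = μd.bind (fun θ => (Q θ).map (fun y => (θ, y)))) :
    (∀ f : T × Y → ℝ, MemLp f 2 μ → 0 ≤ ∫ p, f p * kOp K f p ∂μ) ↔
      (∀ g : T → ℝ, MemLp g 2 μd → 0 ≤ ∫ θ, g θ * kOp Kd g θ ∂μd) :=
  augmented_kernel_positive_iff_general μd Kd Q hrev K hK μ hμ
end

section
/- Jump chain kernel and reversibility: let K be a μ-invariant Markov kernel on T with acceptance probability α(θ) := K(θ, T∖{θ}) > 0 everywhere. Then the jump kernel K̃(θ,A) := K(θ, A∖{θ})/α(θ) is a Markov kernel which is invariant for the probability μ̃(dθ) := α(θ)μ(dθ)/μ(α); moreover K is μ-reversible if and only if K̃ is μ̃-reversible. -/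
open MeasureTheory ProbabilityTheory Filter
open scoped ENNReal

/-! Write `α θ = K θ {θ}ᶜ` and `ρ = α • μ`. By definition `α θ • K̃ θ` is `K θ` restricted to
`{θ}ᶜ`, so `α θ • K̃ θ + δ_θ = K θ + α θ • δ_θ`; integrating against `μ` gives the identity
`ρ ⊗ K̃ + Δ_* μ = μ ⊗ K + Δ_* ρ` of finite measures on `T × T`, `Δ` the diagonal map.
Its second marginal reads `ρ K̃ + μ = μ K + ρ`, so `μ K = μ` forces `ρ K̃ = ρ`. Both diagonal
terms are swap-invariant, so `μ ⊗ K` is swap-invariant iff `ρ ⊗ K̃` is. Normalising `ρ` to `μ̃`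
preserves both properties. -/

open Set

namespace MeasureTheory

variable {T : Type*} [MeasurableSpace T]

theorem Measure.add_right_cancel_of_isFiniteMeasure {μ₁ μ₂ ν : Measure T} [IsFiniteMeasure ν]
    (h : μ₁ + ν = μ₂ + ν) : μ₁ = μ₂ :=
  Measure.ext fun s _ =>
    (ENNReal.add_left_inj (measure_ne_top ν s)).1 (by simpa using congrArg (· s) h)

theorem Measure.map_diag_apply_prod (μ : Measure T) {A B : Set T} (hA : MeasurableSet A)
    (hB : MeasurableSet B) : μ.map (fun x => (x, x)) (A ×ˢ B) = μ (A ∩ B) := by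
  rw [Measure.map_apply (by fun_prop) (hA.prod hB)]
  rfl

theorem Measure.map_swap_map_diag (μ : Measure T) :
    (μ.map fun x => (x, x)).map Prod.swap = μ.map fun x => (x, x) := by
  rw [Measure.map_map measurable_swap (by fun_prop)]
  rfl

theorem Measure.snd_map_diag (μ : Measure T) : (μ.map fun x => (x, x)).snd = μ := by
  rw [Measure.snd, Measure.map_map measurable_snd (by fun_prop)]
  exact Measure.map_id

variable {μ : Measure T}

theorem lintegral_mul_eq_of_le_of_lintegral_eq {g α w : T → ℝ≥0∞} (hg : Measurable g)
    (hgα : g ≤ α) (hint : ∫⁻ x, g x ∂μ = ∫⁻ x, α x ∂μ) (hα : ∫⁻ x, α x ∂μ ≠ ∞)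
    (hw : Measurable w) (hw1 : w ≤ 1) :
    ∫⁻ x, g x * w x ∂μ = ∫⁻ x, α x * w x ∂μ := by
  have hmono : ∀ v : T → ℝ≥0∞, ∫⁻ x, g x * v x ∂μ ≤ ∫⁻ x, α x * v x ∂μ := fun v =>
    lintegral_mono fun x => mul_le_mul_left (hgα x) _
  refine le_antisymm (hmono w) ?_
  have hsplit : ∀ f : T → ℝ≥0∞, ∀ x, f x * w x + f x * (1 - w x) = f x := fun f x => by
    rw [← mul_add, add_tsub_cancel_of_le (show w x ≤ 1 from hw1 x), mul_one]
  have hrest : ∫⁻ x, α x * (1 - w x) ∂μ ≠ ∞ :=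
    ne_top_of_le_ne_top hα (lintegral_mono fun x => mul_le_of_le_one_right' tsub_le_self)
  refine (ENNReal.add_le_add_iff_right hrest).1 ?_
  calc ∫⁻ x, α x * w x ∂μ + ∫⁻ x, α x * (1 - w x) ∂μ ≤ ∫⁻ x, α x ∂μ :=
        (le_lintegral_add _ _).trans_eq (lintegral_congr (hsplit α))
    _ = ∫⁻ x, g x * w x ∂μ + ∫⁻ x, g x * (1 - w x) ∂μ := by
        rw [← hint, ← lintegral_add_left (f := fun x => g x * w x) (hg.mul hw),
          lintegral_congr (hsplit g)]
    _ ≤ _ := add_le_add_right (hmono _) _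

/-- The density `α` need not be measurable (`θ ↦ K θ {θ}ᶜ` is not, in general), so
`μ.withDensity α` is computed through a measurable minorant of `α` with the same integral. -/
theorem lintegral_withDensity_eq_lintegral_mul_of_le_one {α w : T → ℝ≥0∞}
    (hα : ∫⁻ x, α x ∂μ ≠ ∞) (hw : Measurable w) (hw1 : w ≤ 1) :
    ∫⁻ x, w x ∂μ.withDensity α = ∫⁻ x, α x * w x ∂μ := by
  obtain ⟨g, hg, hgα, hint⟩ := exists_measurable_le_lintegral_eq μ α
  have hind : ∀ (f : T → ℝ≥0∞) (s : Set T), s.indicator f = fun x => f x * s.indicator 1 x :=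
    fun f s => funext fun x => by by_cases hx : x ∈ s <;> simp [hx]
  have hρ : μ.withDensity g = μ.withDensity α := by
    ext s hs
    rw [withDensity_apply _ hs, withDensity_apply _ hs, ← lintegral_indicator hs,
      ← lintegral_indicator hs, hind g s, hind α s]
    exact lintegral_mul_eq_of_le_of_lintegral_eq hg hgα hint.symm hα
      (measurable_one.indicator hs) (indicator_le_self' fun _ _ => zero_le_one)
  rw [← hρ, lintegral_withDensity_eq_lintegral_mul _ hg hw]
  exact lintegral_mul_eq_of_le_of_lintegral_eq hg hgα hint.symm hα hw hw1

end MeasureTheory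

section Scaling

variable {X : Type*} [MeasurableSpace X] {ρ : Measure X} {κ : Kernel X X}

theorem Invariant.smul (h : Invariant ρ κ) (c : ℝ≥0∞) : Invariant (c • ρ) κ := by
  rw [Invariant, Measure.bind_smul]
  exact congrArg (c • ·) h

theorem Reversible.smul [SFinite ρ] [IsSFiniteKernel κ] (h : Reversible ρ κ) (c : ℝ≥0∞) :
    Reversible (c • ρ) κ := by
  rw [Reversible, Measure.compProd_smul_left, Measure.map_smul, ← h]

/-- With a non-measurable density, `ρ = μ.withDensity α` may vanish although `α > 0`; then
`(ρ univ)⁻¹ = ∞`. -/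
theorem reversible_inv_measure_univ_smul_iff [IsFiniteMeasure ρ] [IsSFiniteKernel κ] :
    Reversible ((ρ univ)⁻¹ • ρ) κ ↔ Reversible ρ κ := by
  rcases eq_or_ne ρ 0 with rfl | hρ
  · simp
  refine ⟨fun h => ?_, fun h => h.smul _⟩
  simpa [smul_smul, ENNReal.mul_inv_cancel (Measure.measure_univ_ne_zero.2 hρ)
    (measure_ne_top ρ univ)] using h.smul (ρ univ)

end Scaling

section DiagonalCorrection

variable {X : Type*} [MeasurableSpace X] {μ ρ : Measure X} [IsFiniteMeasure μ]
  [IsFiniteMeasure ρ] {K κ : Kernel X X}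

theorem Invariant.of_compProd_add_map_diag [IsSFiniteKernel K] [IsSFiniteKernel κ]
    (hμ : Invariant μ K)
    (h : ρ ⊗ₘ κ + μ.map (fun x => (x, x)) = μ ⊗ₘ K + ρ.map (fun x => (x, x))) :
    Invariant ρ κ := by
  have hsnd := congrArg Measure.snd h
  rw [Measure.snd_add, Measure.snd_add, Measure.snd_compProd, Measure.snd_compProd,
    Measure.snd_map_diag, Measure.snd_map_diag, show K ∘ₘ μ = μ from hμ, add_comm μ] at hsnd
  exact Measure.add_right_cancel_of_isFiniteMeasure hsnd

theorem reversible_iff_of_compProd_add_map_diag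
    (h : ρ ⊗ₘ κ + μ.map (fun x => (x, x)) = μ ⊗ₘ K + ρ.map (fun x => (x, x))) :
    Reversible μ K ↔ Reversible ρ κ := by
  have hswap := congrArg (Measure.map Prod.swap) h
  rw [Measure.map_add _ _ measurable_swap, Measure.map_add _ _ measurable_swap,
    Measure.map_swap_map_diag, Measure.map_swap_map_diag] at hswap
  constructor
  · intro hK
    rw [← hK, ← h] at hswap
    exact (Measure.add_right_cancel_of_isFiniteMeasure hswap).symm
  · intro hκ
    rw [← hκ, h] at hswap
    exact Measure.add_right_cancel_of_isFiniteMeasure hswap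

end DiagonalCorrection

section JumpChain

variable {T : Type*} [MeasurableSpace T]

noncomputable def moveProb (K : Kernel T T) (θ : T) : ℝ≥0∞ := K θ {θ}ᶜ

def IsJumpKernel (K Kt : Kernel T T) : Prop :=
  ∀ θ A, MeasurableSet A → Kt θ A = K θ (A \ {θ}) / moveProb K θ

variable {μ : Measure T} {K Kt : Kernel T T} [IsMarkovKernel K]

theorem lintegral_moveProb_ne_top (ν : Measure T) [IsFiniteMeasure ν] :
    ∫⁻ θ, moveProb K θ ∂ν ≠ ∞ :=
  ne_top_of_le_ne_top (measure_ne_top ν univ)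
    ((lintegral_mono fun θ => (prob_le_one : K θ {θ}ᶜ ≤ 1)).trans_eq lintegral_one)

instance [IsFiniteMeasure μ] : IsFiniteMeasure (μ.withDensity (moveProb K)) :=
  isFiniteMeasure_withDensity (lintegral_moveProb_ne_top μ)

theorem IsJumpKernel.isMarkovKernel (hKt : IsJumpKernel K Kt) (hα : ∀ θ, moveProb K θ ≠ 0) :
    IsMarkovKernel Kt :=
  ⟨fun θ => ⟨by
    rw [hKt θ univ MeasurableSet.univ, ← compl_eq_univ_sdiff]
    exact ENNReal.div_self (hα θ) (measure_ne_top _ _)⟩⟩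

variable [MeasurableSingletonClass T]

theorem measure_diff_singleton_add_indicator (ν : Measure T) [IsProbabilityMeasure ν] (θ : T)
    (B : Set T) : ν (B \ {θ}) + B.indicator 1 θ = ν B + B.indicator (fun _ => ν {θ}ᶜ) θ := by
  by_cases hθ : θ ∈ B
  · rw [indicator_of_mem hθ, indicator_of_mem hθ, Pi.one_apply,
      ← prob_add_prob_compl (μ := ν) (measurableSet_singleton θ), ← add_assoc]
    nth_rw 2 [← inter_singleton_of_mem hθ]
    rw [measure_sdiff_add_inter _ (measurableSet_singleton θ)]
  · rw [indicator_of_notMem hθ, indicator_of_notMem hθ, sdiff_singleton_eq_self hθ]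

theorem IsJumpKernel.moveProb_mul_add_indicator (hKt : IsJumpKernel K Kt)
    (hα : ∀ θ, moveProb K θ ≠ 0) (θ : T) {B : Set T} (hB : MeasurableSet B) :
    moveProb K θ * Kt θ B + B.indicator 1 θ = K θ B + B.indicator (moveProb K) θ := by
  rw [hKt θ B hB, ENNReal.mul_div_cancel (hα θ) (measure_ne_top _ _)]
  exact measure_diff_singleton_add_indicator (K θ) θ B

theorem IsJumpKernel.compProd_add_map_diag_apply_prod [IsFiniteMeasure μ] [IsMarkovKernel Kt]
    (hKt : IsJumpKernel K Kt) (hα : ∀ θ, moveProb K θ ≠ 0) {A B : Set T} (hA : MeasurableSet A)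
    (hB : MeasurableSet B) :
    (μ.withDensity (moveProb K) ⊗ₘ Kt) (A ×ˢ B) + μ.map (fun x => (x, x)) (A ×ˢ B) =
      (μ ⊗ₘ K) (A ×ˢ B) + (μ.withDensity (moveProb K)).map (fun x => (x, x)) (A ×ˢ B) := by
  rw [Measure.compProd_apply_prod hA hB, Measure.compProd_apply_prod hA hB,
    Measure.map_diag_apply_prod _ hA hB, Measure.map_diag_apply_prod _ hA hB, inter_comm,
    ← Measure.restrict_apply hB, ← Measure.restrict_apply hB, restrict_withDensity hA,
    withDensity_apply _ hB, ← lintegral_indicator hB, ← lintegral_indicator_one hB,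
    lintegral_withDensity_eq_lintegral_mul_of_le_one (lintegral_moveProb_ne_top _)
      (Kt.measurable_coe hB) fun θ => prob_le_one,
    ← lintegral_add_right _ (measurable_one.indicator hB),
    ← lintegral_add_left (K.measurable_coe hB)]
  exact lintegral_congr fun θ => hKt.moveProb_mul_add_indicator hα θ hB

theorem IsJumpKernel.compProd_add_map_diag [IsFiniteMeasure μ] [IsMarkovKernel Kt]
    (hKt : IsJumpKernel K Kt) (hα : ∀ θ, moveProb K θ ≠ 0) :
    μ.withDensity (moveProb K) ⊗ₘ Kt + μ.map (fun x => (x, x)) =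
      μ ⊗ₘ K + (μ.withDensity (moveProb K)).map (fun x => (x, x)) := by
  refine ext_of_generate_finite _ generateFrom_prod.symm isPiSystem_prod ?_ ?_
  · rintro _ ⟨A, hA, B, hB, rfl⟩
    simpa only [Measure.coe_add, Pi.add_apply] using
      hKt.compProd_add_map_diag_apply_prod hα hA hB
  · simpa only [Measure.coe_add, Pi.add_apply, univ_prod_univ] using
      hKt.compProd_add_map_diag_apply_prod hα MeasurableSet.univ MeasurableSet.univ

end JumpChain

/-- **jump chain kernel and reversibility.** Let `K` be a `μ`-invariant
Markov kernel on `T` with everywhere positive acceptance probability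
`α(θ) = K(θ, T∖{θ})`. Then the jump kernel `K̃(θ,A) = K(θ, A∖{θ})/α(θ)` is a Markov
kernel invariant for `μ̃(dθ) = α(θ)μ(dθ)/μ(α)`, and `K` is `μ`-reversible iff `K̃`
is `μ̃`-reversible. -/
theorem jump_chain_kernel
    {T : Type*} [MeasurableSpace T] [MeasurableSingletonClass T]
    (μ : Measure T) [IsProbabilityMeasure μ]
    (K : Kernel T T) [IsMarkovKernel K]
    (hinv : Invariant μ K)
    (hα : ∀ θ : T, 0 < K θ {θ}ᶜ)
    (Kt : Kernel T T)
    (hKt : ∀ θ : T, ∀ A : Set T, MeasurableSet A →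
      Kt θ A = K θ (A \ {θ}) / K θ {θ}ᶜ)
    (μt : Measure T)
    (hμt : μt = (∫⁻ θ, K θ {θ}ᶜ ∂μ)⁻¹ • μ.withDensity (fun θ => K θ {θ}ᶜ)) :
    IsMarkovKernel Kt ∧ Invariant μt Kt ∧
      (Reversible μ K ↔ Reversible μt Kt) := by
  have hα0 : ∀ θ, moveProb K θ ≠ 0 := fun θ => (hα θ).ne'
  have hjump : IsJumpKernel K Kt := hKt
  have hKtMarkov := hjump.isMarkovKernel hα0
  set ρ := μ.withDensity (moveProb K)
  have hμt' : μt = (ρ univ)⁻¹ • ρ := by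
    rw [hμt, withDensity_apply _ MeasurableSet.univ, Measure.restrict_univ]
    rfl
  have hid := hjump.compProd_add_map_diag (μ := μ) hα0
  refine ⟨hKtMarkov, hμt' ▸ (hinv.of_compProd_add_map_diag hid).smul _, ?_⟩
  rw [reversible_iff_of_compProd_add_map_diag hid, hμt', reversible_inv_measure_univ_smul_iff]
end
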